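/- For every λ > 0, G_λ is a distributional fundamental solution of −Δ + λ on ℝ²: for every Schwartz function φ : ℝ² → ℂ, ∫_{ℝ²} G_λ(x) (−Δφ(x) + λ φ(x)) dx = φ(0). -/

import Mathlib

/-! The heat kernel `H_t(x) = (4πt)^{-d/2} e^{-‖x‖²/4t}` is the Fourier transform of
`e^{-4π²t‖ξ‖²}` (Mathlib normalises `𝓕 f ξ = ∫ e^{-2πi⟨x, ξ⟩} f x dx`), so
`∫ H_t f = ∫ e^{-4π²t‖ξ‖²} 𝓕 f`. The Green function is `G_λ = ∫₀^∞ e^{-λt} H_t dt`; two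
applications of Fubini then give `∫ G_λ ψ = ∫ (λ + 4π²‖ξ‖²)⁻¹ 𝓕 ψ` for Schwartz `ψ`. Since
`𝓕 (λφ - Δφ) = (λ + 4π²‖ξ‖²) 𝓕 φ`, the pairing of `G_λ` with `λφ - Δφ` is `∫ 𝓕 φ = φ 0`
by Fourier inversion. -/

open MeasureTheory

noncomputable section

/-- ℝ², i.e. two-dimensional Euclidean space. -/
abbrev E2 := EuclideanSpace ℝ (Fin 2)

/-- The Green function `G_λ` of `-Δ + λ` on `ℝ²`, defined via the heat-kernel formula
`G_λ(x) = ∫₀^∞ (4πt)⁻¹ exp(-‖x‖²/(4t) - λt) dt`. -/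
noncomputable def greenFn (l : ℝ) (x : E2) : ℝ :=
  ∫ t in Set.Ioi (0 : ℝ), (4 * Real.pi * t)⁻¹ * Real.exp (-‖x‖ ^ 2 / (4 * t) - l * t)

/-- The Laplacian `Δf(x) = ∑ᵢ ∂²f/∂xᵢ²(x)` of a function on ℝ². -/
noncomputable def lapl {F : Type*} [NormedAddCommGroup F] [NormedSpace ℝ F]
    (f : E2 → F) (x : E2) : F :=
  ∑ i : Fin 2, fderiv ℝ (fun y => fderiv ℝ f y (EuclideanSpace.single i 1)) x
    (EuclideanSpace.single i 1)

open Real Set Module FourierTransform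
open scoped SchwartzMap Laplacian

section LaplaceTransform

variable {W : Type*} [MeasurableSpace W] {μ : Measure W} [SFinite μ]
  {E : Type*} [NormedAddCommGroup E] [NormedSpace ℝ E] [CompleteSpace E]

theorem integral_exp_neg_mul_Ioi_zero {c : ℝ} (hc : 0 < c) :
    ∫ t in Ioi 0, exp (-(c * t)) = c⁻¹ := by
  simpa [neg_mul, neg_div] using integral_exp_mul_Ioi (neg_lt_zero.2 hc) 0

theorem integral_Ioi_integral_exp_smul {lam : ℝ} (hlam : 0 < lam) {m : W → ℝ}
    (hm : Measurable m) (hm0 : ∀ ξ, 0 ≤ m ξ) {g : W → E} (hg : Integrable g μ) :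
    ∫ t in Ioi 0, ∫ ξ, exp (-((lam + m ξ) * t)) • g ξ ∂μ = ∫ ξ, (lam + m ξ)⁻¹ • g ξ ∂μ := by
  have hint : Integrable (Function.uncurry fun t ξ ↦ exp (-((lam + m ξ) * t)) • g ξ)
      ((volume.restrict (Ioi 0)).prod μ) := by
    refine ((exp_neg_integrableOn_Ioi 0 hlam).mul_prod hg.norm).mono' ?_ ?_
    · exact (by fun_prop : Measurable fun p : ℝ × W ↦ exp (-((lam + m p.2) * p.1)))
        |>.aestronglyMeasurable.smul hg.1.comp_snd
    · filter_upwards [Measure.quasiMeasurePreserving_fst.ae (ae_restrict_mem measurableSet_Ioi)]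
        with ⟨t, ξ⟩ (ht : 0 < t)
      rw [Function.uncurry_apply_pair, norm_smul, norm_of_nonneg (exp_nonneg _)]
      dsimp only
      gcongr
      nlinarith [hm0 ξ]
  rw [integral_integral_swap hint]
  congr 1 with ξ
  rw [integral_smul_const, integral_exp_neg_mul_Ioi_zero (by linarith [hm0 ξ])]

end LaplaceTransform

variable {V : Type*} [NormedAddCommGroup V] [InnerProductSpace ℝ V]

def heatKernel (t : ℝ) (x : V) : ℝ :=
  (4 * π * t) ^ (-(finrank ℝ V : ℝ) / 2) * exp (-‖x‖ ^ 2 / (4 * t))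

theorem heatKernel_nonneg {t : ℝ} (ht : 0 ≤ t) (x : V) : 0 ≤ heatKernel t x := by
  unfold heatKernel; positivity

variable [FiniteDimensional ℝ V] [MeasurableSpace V] [BorelSpace V]
  {F : Type*} [NormedAddCommGroup F] [NormedSpace ℂ F] [CompleteSpace F]

theorem integral_heatKernel {t : ℝ} (ht : 0 < t) : ∫ x : V, heatKernel t x = 1 := by
  have h := GaussianFourier.integral_rexp_neg_mul_sq_norm (V := V)
    (inv_pos.2 (by positivity : 0 < 4 * t))
  simp only [heatKernel, neg_div, div_eq_inv_mul (‖_‖ ^ 2), ← neg_mul]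
  rw [integral_const_mul, h, div_inv_eq_mul, rpow_neg (by positivity),
    show π * (4 * t) = 4 * π * t by ring, inv_mul_cancel₀ (by positivity)]

theorem integrable_heatKernel {t : ℝ} (ht : 0 < t) : Integrable (heatKernel (V := V) t) :=
  .of_integral_ne_zero (by simp [integral_heatKernel ht])

theorem fourier_gaussian_eq_heatKernel {t : ℝ} (ht : 0 < t) (x : V) :
    𝓕 (fun ξ : V ↦ Complex.exp (-(4 * π ^ 2 * t : ℝ) * ‖ξ‖ ^ 2)) x = heatKernel t x := by
  have hb : 0 < ((4 * π ^ 2 * t : ℝ) : ℂ).re := by simp only [Complex.ofReal_re]; positivity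
  have hpow : (π / (4 * π ^ 2 * t : ℝ) : ℂ) ^ (finrank ℝ V / 2 : ℂ)
      = ((4 * π * t) ^ (-(finrank ℝ V : ℝ) / 2) : ℝ) := by
    rw [neg_div, rpow_neg (by positivity), ← inv_rpow (by positivity),
      Complex.ofReal_cpow (by positivity)]
    push_cast
    congr 1
    field_simp
  rw [fourier_gaussian_innerProductSpace hb, hpow, heatKernel, Complex.ofReal_mul _ (exp _),
    Complex.ofReal_exp]
  congr 2
  push_cast
  field_simp

theorem integral_heatKernel_smul {t : ℝ} (ht : 0 < t) {f : V → F} (hf : Integrable f) :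
    ∫ x, heatKernel t x • f x = ∫ ξ, exp (-(4 * π ^ 2 * t) * ‖ξ‖ ^ 2) • 𝓕 f ξ := by
  have hb : 0 < ((4 * π ^ 2 * t : ℝ) : ℂ).re := by simp only [Complex.ofReal_re]; positivity
  have hg := GaussianFourier.integrable_cexp_neg_mul_sq_norm_add hb 0 (0 : V)
  simp only [inner_zero_left, mul_zero, add_zero, Complex.ofReal_zero] at hg
  have h := VectorFourier.integral_fourierIntegral_smul_eq_flip (L := innerₗ V)
    Real.continuous_fourierChar continuous_inner hg hf
  simp only [flip_innerₗ] at h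
  change ∫ x, 𝓕 (fun ξ : V ↦ Complex.exp (-(4 * π ^ 2 * t : ℝ) * ‖ξ‖ ^ 2)) x • f x
    = ∫ ξ, _ • 𝓕 f ξ at h
  simp only [fourier_gaussian_eq_heatKernel ht, Complex.coe_smul] at h
  rw [h]
  congr 1 with ξ
  rw [← Complex.coe_smul]
  push_cast
  ring_nf

def resolventKernel (lam : ℝ) (x : V) : ℝ :=
  ∫ t in Ioi 0, exp (-(lam * t)) * heatKernel t x

theorem integrable_exp_mul_heatKernel {lam : ℝ} (hlam : 0 < lam) :
    Integrable (fun p : ℝ × V ↦ exp (-(lam * p.1)) * heatKernel p.1 p.2)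
      ((volume.restrict (Ioi 0)).prod volume) := by
  have hmeas : Measurable fun p : ℝ × V ↦ exp (-(lam * p.1)) * heatKernel p.1 p.2 := by
    unfold heatKernel; fun_prop
  rw [integrable_prod_iff hmeas.aestronglyMeasurable]
  refine ⟨?_, ?_⟩
  · filter_upwards [ae_restrict_mem measurableSet_Ioi] with t (ht : 0 < t)
    exact (integrable_heatKernel ht).const_mul _
  · refine (exp_neg_integrableOn_Ioi 0 hlam).congr_fun (fun t (ht : 0 < t) ↦ ?_) measurableSet_Ioi
    have hnorm (x : V) : ‖heatKernel t x‖ = heatKernel t x :=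
      norm_of_nonneg (heatKernel_nonneg ht.le x)
    simp only [norm_mul, norm_of_nonneg (exp_nonneg _), hnorm, integral_const_mul,
      integral_heatKernel ht, mul_one, neg_mul]

theorem integral_resolventKernel_smul {lam : ℝ} (hlam : 0 < lam) (ψ : 𝓢(V, F)) :
    ∫ x, resolventKernel lam x • ψ x = ∫ ξ, (lam + 4 * π ^ 2 * ‖ξ‖ ^ 2)⁻¹ • 𝓕 ψ ξ := by
  have hint : Integrable (Function.uncurry fun t x ↦ (exp (-(lam * t)) * heatKernel t x) • ψ x)
      ((volume.restrict (Ioi 0)).prod volume) := by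
    refine ((integrable_exp_mul_heatKernel hlam).mul_const (SchwartzMap.seminorm ℝ 0 0 ψ)).mono'
      ?_ ?_
    · exact (integrable_exp_mul_heatKernel hlam).1.smul ψ.continuous.aestronglyMeasurable.comp_snd
    · filter_upwards [Measure.quasiMeasurePreserving_fst.ae (ae_restrict_mem measurableSet_Ioi)]
        with ⟨t, x⟩ (ht : 0 < t)
      rw [Function.uncurry_apply_pair, norm_smul,
        norm_of_nonneg (mul_nonneg (exp_nonneg _) (heatKernel_nonneg ht.le x))]
      exact mul_le_mul_of_nonneg_left (ψ.norm_le_seminorm ℝ x)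
        (mul_nonneg (exp_nonneg _) (heatKernel_nonneg ht.le x))
  have hslice : ∀ t ∈ Ioi (0 : ℝ), ∫ x, (exp (-(lam * t)) * heatKernel t x) • ψ x
      = ∫ ξ, exp (-((lam + 4 * π ^ 2 * ‖ξ‖ ^ 2) * t)) • 𝓕 ψ ξ := fun t ht ↦ by
    simp_rw [mul_smul, integral_smul, integral_heatKernel_smul ht ψ.integrable,
      ← SchwartzMap.fourier_coe, ← integral_smul, smul_smul, ← exp_add]
    congr 1 with ξ
    ring_nf
  calc ∫ x, resolventKernel lam x • ψ x
      = ∫ x, ∫ t in Ioi 0, (exp (-(lam * t)) * heatKernel t x) • ψ x := by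
        simp_rw [resolventKernel, integral_smul_const]
    _ = ∫ t in Ioi 0, ∫ ξ, exp (-((lam + 4 * π ^ 2 * ‖ξ‖ ^ 2) * t)) • 𝓕 ψ ξ := by
        rw [← integral_integral_swap hint, setIntegral_congr_fun measurableSet_Ioi hslice]
    _ = _ := integral_Ioi_integral_exp_smul hlam (by fun_prop) (fun ξ ↦ by positivity)
        (𝓕 ψ).integrable

theorem fourier_laplacian_apply (φ : 𝓢(V, F)) (ξ : V) :
    𝓕 (Δ φ) ξ = -(4 * π ^ 2 * ‖ξ‖ ^ 2) • 𝓕 φ ξ := by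
  rw [SchwartzMap.laplacian_eq_fourierMultiplierCLM, fourier_smul,
    SchwartzMap.fourierMultiplierCLM_apply, fourier_fourierInv_eq, smul_apply,
    SchwartzMap.smulLeftCLM_apply_apply (by fun_prop), smul_smul]
  ring_nf

theorem fourier_smul_sub_laplacian_apply (lam : ℝ) (φ : 𝓢(V, F)) (ξ : V) :
    𝓕 (lam • φ - Δ φ) ξ = (lam + 4 * π ^ 2 * ‖ξ‖ ^ 2) • 𝓕 φ ξ := by
  rw [sub_eq_add_neg, FourierAdd.fourier_add, FourierTransform.fourier_neg, fourier_smul, add_apply, neg_apply,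
    smul_apply, fourier_laplacian_apply, add_smul, neg_smul, neg_neg]

theorem integral_fourier_eq_apply_zero (φ : 𝓢(V, F)) : ∫ ξ, 𝓕 φ ξ = φ 0 :=
  calc ∫ ξ, 𝓕 φ ξ = 𝓕⁻ (𝓕 φ) 0 := by
        rw [SchwartzMap.fourierInv_coe, Real.fourierInv_eq]; simp
    _ = φ 0 := by rw [fourierInv_fourier_eq]

theorem greenFn_eq_resolventKernel (lam : ℝ) : greenFn lam = resolventKernel lam := by
  ext x
  refine integral_congr_ae (ae_of_all _ fun t ↦ ?_)
  simp only [heatKernel, finrank_euclideanSpace_fin]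
  rw [show -((2 : ℕ) : ℝ) / 2 = -1 by norm_num, rpow_neg_one, sub_eq_add_neg, exp_add]
  ring

theorem lapl_eq_laplacian {G : Type*} [NormedAddCommGroup G] [NormedSpace ℝ G] {f : E2 → G}
    (hf : ContDiff ℝ 2 f) : lapl f = Δ f := by
  ext x
  rw [InnerProductSpace.laplacian_eq_iteratedFDeriv_orthonormalBasis f
    (EuclideanSpace.basisFun (Fin 2) ℝ)]
  refine Finset.sum_congr rfl fun i _ ↦ ?_
  have hdf : DifferentiableAt ℝ (fderiv ℝ f) x :=
    (hf.fderiv_right (m := 1) le_rfl).differentiable one_ne_zero x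
  rw [iteratedFDeriv_two_apply, fderiv_clm_apply hdf (differentiableAt_const _)]
  simp

/-- For `λ > 0`, `G_λ` is a distributional fundamental solution of `-Δ + λ` on ℝ²:
for every Schwartz function `φ`, `∫ G_λ(x)(-Δφ(x) + λφ(x)) dx = φ(0)`. -/
theorem green_fundamental_solution (lam : ℝ) (hlam : 0 < lam) (φ : SchwartzMap E2 ℂ) :
    ∫ x : E2, (greenFn lam x : ℂ) * (-(lapl (fun y => φ y) x) + (lam : ℂ) * φ x) = φ 0 := by
  calc ∫ x : E2, (greenFn lam x : ℂ) * (-(lapl (fun y => φ y) x) + (lam : ℂ) * φ x)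
      = ∫ x, resolventKernel lam x • (lam • φ - Δ φ) x := by
        congr 1 with x
        rw [greenFn_eq_resolventKernel, lapl_eq_laplacian (φ.smooth 2),
          ← SchwartzMap.laplacian_apply, Complex.real_smul, sub_apply, smul_apply,
          Complex.real_smul]
        ring
    _ = ∫ ξ, (lam + 4 * π ^ 2 * ‖ξ‖ ^ 2)⁻¹ • 𝓕 (lam • φ - Δ φ) ξ :=
        integral_resolventKernel_smul hlam _
    _ = ∫ ξ, 𝓕 φ ξ := by
        congr 1 with ξ
        rw [fourier_smul_sub_laplacian_apply, smul_smul, inv_mul_cancel₀ (by positivity),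
          one_smul]
    _ = φ 0 := integral_fourier_eq_apply_zero φ

end
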